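/- arXiv:2506.14296 — 2 statements merged into one kernel-verified Lean document; each statement's English description precedes it below -/
import Mathlib

section
/- Let η be the Minkowski bilinear form on ℝ⁴, η(p, q) = p₀q₀ − p₁q₁ − p₂q₂ − p₃q₃. If p, q ∈ ℝ⁴ satisfy η(p, p) = η(q, q) ≥ 0, p₀ > 0 and q₀ > 0, then there exists a linear equivalence T : ℝ⁴ → ℝ⁴ with η(Tv, Tu) = η(v, u) for all v, u ∈ ℝ⁴ and T p = q. -/
/-- The Minkowski bilinear form on `ℝ⁴`. -/
def minkowski (p q : Fin 4 → ℝ) : ℝ :=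
  p 0 * q 0 - p 1 * q 1 - p 2 * q 2 - p 3 * q 3

lemma mink_expand (v u n m : Fin 4 → ℝ) (c d : ℝ) :
    minkowski (v - c • n) (u - d • m) =
      minkowski v u - d * minkowski v m - c * minkowski n u + c * d * minkowski n m := by
  simp only [minkowski, Pi.sub_apply, Pi.smul_apply, smul_eq_mul]
  ring

lemma mink_sub_left (v n u : Fin 4 → ℝ) (c : ℝ) :
    minkowski (v - c • n) u = minkowski v u - c * minkowski n u := by
  simp only [minkowski, Pi.sub_apply, Pi.smul_apply, smul_eq_mul]
  ring

lemma mink_symm (v u : Fin 4 → ℝ) : minkowski v u = minkowski u v := by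
  simp only [minkowski]; ring

/-- Minkowski reflection across the hyperplane orthogonal to `n`, as a linear map. -/
noncomputable def reflLin (n : Fin 4 → ℝ) : (Fin 4 → ℝ) →ₗ[ℝ] (Fin 4 → ℝ) where
  toFun v := v - (2 * minkowski v n / minkowski n n) • n
  map_add' v u := by
    funext i
    simp only [minkowski, Pi.sub_apply, Pi.smul_apply, Pi.add_apply, smul_eq_mul]
    ring
  map_smul' c v := by
    funext i
    simp only [minkowski, Pi.sub_apply, Pi.smul_apply, smul_eq_mul, RingHom.id_apply]
    ring

lemma reflLin_apply (n v : Fin 4 → ℝ) :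
    reflLin n v = v - (2 * minkowski v n / minkowski n n) • n := rfl

lemma reflLin_involutive (n : Fin 4 → ℝ) (hn : minkowski n n ≠ 0) :
    Function.Involutive (reflLin n) := by
  intro v
  funext i
  simp only [reflLin_apply, mink_sub_left, Pi.sub_apply, Pi.smul_apply, smul_eq_mul]
  field_simp
  ring

lemma reflLin_isometry (n : Fin 4 → ℝ) (hn : minkowski n n ≠ 0) (v u : Fin 4 → ℝ) :
    minkowski (reflLin n v) (reflLin n u) = minkowski v u := by
  simp only [reflLin_apply, mink_expand]
  rw [mink_symm n u]
  field_simp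
  ring

/-- Minkowski reflection as a linear equivalence. -/
noncomputable def reflEquiv (n : Fin 4 → ℝ) (hn : minkowski n n ≠ 0) :
    (Fin 4 → ℝ) ≃ₗ[ℝ] (Fin 4 → ℝ) :=
  LinearEquiv.ofLinear (reflLin n) (reflLin n)
    (LinearMap.ext fun v => reflLin_involutive n hn v)
    (LinearMap.ext fun v => reflLin_involutive n hn v)

lemma reflEquiv_apply (n : Fin 4 → ℝ) (hn : minkowski n n ≠ 0) (v : Fin 4 → ℝ) :
    reflEquiv n hn v = reflLin n v := rfl

/-- The reflection along `p - q` maps `p` to `q` when they have the same norm. -/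
lemma reflLin_maps (p q : Fin 4 → ℝ) (heq : minkowski p p = minkowski q q)
    (hn : minkowski (p - q) (p - q) ≠ 0) :
    reflLin (p - q) p = q := by
  have key : minkowski (p - q) (p - q) = 2 * minkowski p (p - q) := by
    simp only [minkowski, Pi.sub_apply] at heq ⊢
    linear_combination -heq
  rw [reflLin_apply, key]
  have h2 : 2 * minkowski p (p - q) ≠ 0 := by rw [← key]; exact hn
  have hne : minkowski p (p - q) ≠ 0 := by
    intro h; apply h2; rw [h]; ring
  rw [show (2 * minkowski p (p - q) / (2 * minkowski p (p - q))) = 1 by field_simp]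
  simp

set_option maxHeartbeats 1000000 in
/-- If `p, q ∈ ℝ⁴` satisfy `η(p,p) = η(q,q) ≥ 0`, `p₀ > 0` and `q₀ > 0`, then
there is a linear equivalence of `ℝ⁴` preserving the Minkowski form `η` and sending `p` to
`q`. -/
theorem lorentz_transitive_on_future_orbits
    (p q : Fin 4 → ℝ) (heq : minkowski p p = minkowski q q) (hpos : 0 ≤ minkowski p p)
    (hp : 0 < p 0) (hq : 0 < q 0) :
    ∃ T : (Fin 4 → ℝ) ≃ₗ[ℝ] (Fin 4 → ℝ),
      (∀ v u : Fin 4 → ℝ, minkowski (T v) (T u) = minkowski v u) ∧ T p = q := by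
  by_cases hn : minkowski (p - q) (p - q) ≠ 0
  · exact ⟨reflEquiv (p - q) hn,
      fun v u => reflLin_isometry (p - q) hn v u, reflLin_maps p q heq hn⟩
  push_neg at hn
  rcases lt_or_eq_of_le hpos with hm | hm
  · -- timelike: p = q, use identity
    have hpq : p = q := by
      have hd : minkowski (p - q) (p - q) = 0 := hn
      simp only [minkowski, Pi.sub_apply] at hd heq hm
      have hpd : p 0 * (p 0 - q 0) - p 1 * (p 1 - q 1) - p 2 * (p 2 - q 2)
          - p 3 * (p 3 - q 3) = 0 := by linear_combination hd / 2 + heq / 2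
      obtain ⟨d0, d1, d2, d3, e0, e1, e2, e3⟩ :
          ∃ d0 d1 d2 d3 : ℝ, p 0 - q 0 = d0 ∧ p 1 - q 1 = d1 ∧ p 2 - q 2 = d2 ∧
            p 3 - q 3 = d3 := ⟨_, _, _, _, rfl, rfl, rfl, rfl⟩
      rw [e0, e1, e2, e3] at hd hpd
      have hcs : (p 1 * d1 + p 2 * d2 + p 3 * d3) ^ 2
          ≤ (p 1 ^ 2 + p 2 ^ 2 + p 3 ^ 2) * (d1 ^ 2 + d2 ^ 2 + d3 ^ 2) := by
        nlinarith [sq_nonneg (p 1 * d2 - p 2 * d1), sq_nonneg (p 1 * d3 - p 3 * d1),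
          sq_nonneg (p 2 * d3 - p 3 * d2)]
      have hsum : d1 ^ 2 + d2 ^ 2 + d3 ^ 2 = d0 ^ 2 := by linear_combination -hd
      have hpd' : p 0 * d0 = p 1 * d1 + p 2 * d2 + p 3 * d3 := by linear_combination hpd
      have hm2 : p 1 ^ 2 + p 2 ^ 2 + p 3 ^ 2 < p 0 ^ 2 := by nlinarith [hm]
      have key : p 0 ^ 2 * d0 ^ 2 ≤ (p 1 ^ 2 + p 2 ^ 2 + p 3 ^ 2) * d0 ^ 2 := by
        calc p 0 ^ 2 * d0 ^ 2 = (p 0 * d0) ^ 2 := by ring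
          _ = (p 1 * d1 + p 2 * d2 + p 3 * d3) ^ 2 := by rw [hpd']
          _ ≤ (p 1 ^ 2 + p 2 ^ 2 + p 3 ^ 2) * (d1 ^ 2 + d2 ^ 2 + d3 ^ 2) := hcs
          _ = (p 1 ^ 2 + p 2 ^ 2 + p 3 ^ 2) * d0 ^ 2 := by rw [hsum]
      have hd0sq : d0 ^ 2 ≤ 0 := by
        by_contra hcon
        push_neg at hcon
        have := mul_lt_mul_of_pos_right hm2 hcon
        linarith
      have h0 : d0 = 0 := by
        have : d0 ^ 2 = 0 := le_antisymm hd0sq (sq_nonneg d0)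
        exact pow_eq_zero_iff (two_ne_zero) |>.mp this
      rw [h0] at hsum
      norm_num at hsum
      have h1 : d1 = 0 := pow_eq_zero_iff two_ne_zero |>.mp
        (le_antisymm (by linarith [sq_nonneg d2, sq_nonneg d3]) (sq_nonneg d1))
      have h2 : d2 = 0 := pow_eq_zero_iff two_ne_zero |>.mp
        (le_antisymm (by linarith [sq_nonneg d1, sq_nonneg d3]) (sq_nonneg d2))
      have h3 : d3 = 0 := pow_eq_zero_iff two_ne_zero |>.mp
        (le_antisymm (by linarith [sq_nonneg d1, sq_nonneg d2]) (sq_nonneg d3))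
      rw [h0] at e0; rw [h1] at e1; rw [h2] at e2; rw [h3] at e3
      funext i
      fin_cases i
      · exact sub_eq_zero.mp e0
      · exact sub_eq_zero.mp e1
      · exact sub_eq_zero.mp e2
      · exact sub_eq_zero.mp e3
    exact ⟨LinearEquiv.refl ℝ _, fun v u => rfl, by simp [hpq]⟩
  · -- null case: go through the spatially-reflected point r
    set r : Fin 4 → ℝ := ![p 0, -p 1, -p 2, -p 3] with hrdef
    have hr0 : r 0 = p 0 := rfl
    have hr1 : r 1 = -p 1 := rfl
    have hr2 : r 2 = -p 2 := rfl
    have hr3 : r 3 = -p 3 := rfl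
    have hm' : minkowski p p = 0 := hm.symm
    have hd : minkowski (p - q) (p - q) = 0 := hn
    have hrr : minkowski r r = minkowski p p := by
      simp only [minkowski, hr0, hr1, hr2, hr3]; ring
    have hn1 : minkowski (p - r) (p - r) ≠ 0 := by
      have h : minkowski (p - r) (p - r) = -4 * (p 0)^2 := by
        simp only [minkowski, Pi.sub_apply, hr0, hr1, hr2, hr3] at hm' ⊢
        linear_combination 4 * hm'
      rw [h]; exact ne_of_lt (by nlinarith)
    have hn2 : minkowski (r - q) (r - q) ≠ 0 := by
      have h : minkowski (r - q) (r - q) = -4 * (p 0 * q 0) := by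
        simp only [minkowski, Pi.sub_apply, hr0, hr1, hr2, hr3] at hm' hd heq ⊢
        linear_combination -hd + 4 * hm' - 2 * heq
      rw [h]; exact ne_of_lt (by nlinarith [mul_pos hp hq])
    refine ⟨(reflEquiv (p - r) hn1).trans (reflEquiv (r - q) hn2), ?_, ?_⟩
    · intro v u
      simp only [LinearEquiv.trans_apply, reflEquiv_apply]
      rw [reflLin_isometry _ hn2, reflLin_isometry _ hn1]
    · simp only [LinearEquiv.trans_apply, reflEquiv_apply]
      rw [reflLin_maps p r (by rw [hrr]) hn1,
        reflLin_maps r q (by rw [hrr, heq]) hn2]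
end

section
/- Let 𝔢(2) be the real Lie algebra ℝ³ with basis J = (1,0,0), P₁ = (0,1,0), P₂ = (0,0,1) and Lie bracket determined by [J, P₁] = P₂, [J, P₂] = −P₁, [P₁, P₂] = 0; explicitly [(j, p₁, p₂), (j', p₁', p₂')] = (0, p₂ j' − j p₂', j p₁' − p₁ j'). Then every alternating ℝ-bilinear form ω : 𝔢(2) × 𝔢(2) → ℝ is a Chevalley–Eilenberg 2-cocycle, i.e., ω([x, y], z) + ω([y, z], x) + ω([z, x], y) = 0 for all x, y, z ∈ 𝔢(2). -/
/-- The Lie bracket of `𝔢(2)` on `ℝ³` with basis `J = (1,0,0)`, `P₁ = (0,1,0)`,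
`P₂ = (0,0,1)`: `[(j, p₁, p₂), (j', p₁', p₂')] = (0, p₂ j' − j p₂', j p₁' − p₁ j')`,
determined by `[J, P₁] = P₂`, `[J, P₂] = −P₁`, `[P₁, P₂] = 0`. -/
def e2Bracket (x y : Fin 3 → ℝ) : Fin 3 → ℝ :=
  ![0, x 2 * y 0 - x 0 * y 2, x 0 * y 1 - x 1 * y 0]

lemma decomp (v : Fin 3 → ℝ) :
    v = v 0 • ![(1:ℝ),0,0] + v 1 • ![(0:ℝ),1,0] + v 2 • ![(0:ℝ),0,1] := by
  funext i
  fin_cases i <;> simp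

/-- Every alternating ℝ-bilinear form on `𝔢(2)` is a Chevalley–Eilenberg
2-cocycle: `ω([x,y],z) + ω([y,z],x) + ω([z,x],y) = 0`. -/
theorem e2_alternating_forms_are_cocycles
    (ω : (Fin 3 → ℝ) →ₗ[ℝ] (Fin 3 → ℝ) →ₗ[ℝ] ℝ) (halt : ∀ x, ω x x = 0) :
    ∀ x y z : Fin 3 → ℝ,
      ω (e2Bracket x y) z + ω (e2Bracket y z) x + ω (e2Bracket z x) y = 0 := by
  have hsymm : ∀ a b, ω a b = -ω b a := by
    intro a b
    have h := halt (a + b)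
    simp [map_add, halt] at h
    linarith
  intro x y z
  have hb : ∀ a b : Fin 3 → ℝ, e2Bracket a b =
      (a 2 * b 0 - a 0 * b 2) • ![(0:ℝ),1,0] + (a 0 * b 1 - a 1 * b 0) • ![(0:ℝ),0,1] := by
    intro a b
    funext i
    fin_cases i <;> simp [e2Bracket]
  have hexp : ∀ (a v : Fin 3 → ℝ), ω a v =
      v 0 * ω a ![(1:ℝ),0,0] + v 1 * ω a ![(0:ℝ),1,0] + v 2 * ω a ![(0:ℝ),0,1] := by
    intro a v
    conv_lhs => rw [decomp v]
    simp only [map_add, map_smul, smul_eq_mul]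
  rw [hb, hb, hb]
  simp only [map_add, map_smul, LinearMap.add_apply, LinearMap.smul_apply, smul_eq_mul]
  rw [hexp _ z, hexp _ z, hexp _ x, hexp _ x, hexp _ y, hexp _ y]
  rw [hsymm ![(0:ℝ),0,1] ![(0:ℝ),1,0], hsymm ![(0:ℝ),1,0] ![(1:ℝ),0,0],
    hsymm ![(0:ℝ),0,1] ![(1:ℝ),0,0], halt, halt]
  ring
end
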